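/- arXiv:2210.02331 — 2 statements merged into one kernel-verified Lean document; each statement's English description precedes it below -/
import Mathlib

section
/- Assume H satisfies (H0), (H1), (H2) and (H7). Then for every q>2, every ε>0 and every γ>γ₀ there exists a constant κ_ε>0 such that for all w∈ℝ²: |H_u(w)|+|H_v(w)|≤ε|w|^τ+κ_ε|w|^{q−1}(e^{γ|w|²}−1), and consequently |H(w)|≤ε|w|^{τ+1}+κ_ε|w|^{q}(e^{γ|w|²}−1). -/
open MeasureTheory Filter Topology Asymptotics Real Set Bornology

noncomputable section

/-- The plane `ℝ²`, domain of the functions. -/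
abbrev Plane := EuclideanSpace ℝ (Fin 2)

/-- For `w = (u,v) ∈ ℝ²`, the quantity `|w|² = u² + v²`. -/
def nsq (w : ℝ × ℝ) : ℝ := w.1 ^ 2 + w.2 ^ 2

/-- For `w = (u,v) ∈ ℝ²`, the euclidean norm `|w| = √(u² + v²)`. -/
def normR2 (w : ℝ × ℝ) : ℝ := Real.sqrt (nsq w)

/-- `H_u`, the first partial derivative of `H`. -/
def Hu (H : ℝ × ℝ → ℝ) (w : ℝ × ℝ) : ℝ := fderiv ℝ H w (1, 0)

/-- `H_v`, the second partial derivative of `H`. -/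
def Hv (H : ℝ × ℝ → ℝ) (w : ℝ × ℝ) : ℝ := fderiv ℝ H w (0, 1)

/-- `H̃(w) = ∇H(w)·w - 2 H(w)`. -/
def Htil (H : ℝ × ℝ → ℝ) (w : ℝ × ℝ) : ℝ := Hu H w * w.1 + Hv H w * w.2 - 2 * H w

/-- Membership in `H¹(ℝ²)`: `u ∈ L²`, differentiable with gradient in `L²`. -/
def InH1 (u : Plane → ℝ) : Prop :=
  MemLp u 2 volume ∧ Differentiable ℝ u ∧ MemLp (fun x => ‖gradient u x‖) 2 volume

/-- A radial function on the plane. -/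
def Radial (u : Plane → ℝ) : Prop := ∀ x y : Plane, ‖x‖ = ‖y‖ → u x = u y

/-- `‖∇u‖_{L²}²`. -/
def grad2 (u : Plane → ℝ) : ℝ := ∫ x, ‖gradient u x‖ ^ 2

/-- `‖u‖_{L²}²`. -/
def mass (u : Plane → ℝ) : ℝ := ∫ x, (u x) ^ 2

/-- The torus `𝒯(a,b)`. -/
def InT (a b : ℝ) (w : (Plane → ℝ) × (Plane → ℝ)) : Prop :=
  InH1 w.1 ∧ InH1 w.2 ∧ mass w.1 = a ^ 2 ∧ mass w.2 = b ^ 2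

/-- The radial torus `𝒯_r(a,b)`. -/
def InTr (a b : ℝ) (w : (Plane → ℝ) × (Plane → ℝ)) : Prop :=
  InT a b w ∧ Radial w.1 ∧ Radial w.2

/-- `|∇w|₂² = ‖∇u‖_{L²}² + ‖∇v‖_{L²}²`. -/
def gradD2 (w : (Plane → ℝ) × (Plane → ℝ)) : ℝ := grad2 w.1 + grad2 w.2

/-- The energy functional `J`. -/
def Jfun (H : ℝ × ℝ → ℝ) (w : (Plane → ℝ) × (Plane → ℝ)) : ℝ :=
  (1 / 2) * gradD2 w - ∫ x, H (w.1 x, w.2 x)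

/-- The Pohozaev functional `P`. -/
def Pfun (H : ℝ × ℝ → ℝ) (w : (Plane → ℝ) × (Plane → ℝ)) : ℝ :=
  gradD2 w - ∫ x, Htil H (w.1 x, w.2 x)

/-- The `L²`-invariant scaling `F(w,s)(x) = (eˢ u(eˢ x), eˢ v(eˢ x))`. -/
def scaleF (w : (Plane → ℝ) × (Plane → ℝ)) (s : ℝ) : (Plane → ℝ) × (Plane → ℝ) :=
  (fun x => Real.exp s * w.1 (Real.exp s • x), fun x => Real.exp s * w.2 (Real.exp s • x))

/-- Hypothesis (H1): `H_u(w) = o(|w|^τ)` and `H_v(w) = o(|w|^τ)` as `|w| → 0`. -/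
def cond1 (H : ℝ × ℝ → ℝ) (τ : ℝ) : Prop :=
  (Hu H) =o[𝓝 0] (fun w : ℝ × ℝ => normR2 w ^ τ) ∧
  (Hv H) =o[𝓝 0] (fun w : ℝ × ℝ => normR2 w ^ τ)

/-- Hypothesis (H2): `0 < θ H(w) ≤ ∇H(w)·w` for all `w ≠ 0`. -/
def cond2 (H : ℝ × ℝ → ℝ) (θ : ℝ) : Prop :=
  ∀ w : ℝ × ℝ, w ≠ 0 → 0 < θ * H w ∧ θ * H w ≤ Hu H w * w.1 + Hv H w * w.2

/-- Hypothesis (H3). -/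
def cond3 (H : ℝ × ℝ → ℝ) : Prop :=
  (∀ u : ℝ, Hu H (u, 0) = 0) ∧ (∀ v : ℝ, Hv H (0, v) = 0)

/-- Hypothesis (H4): `H_u(w) u > 0` and `H_v(w) v > 0` for `u, v ≠ 0`. -/
def cond4 (H : ℝ × ℝ → ℝ) : Prop :=
  ∀ u v : ℝ, u ≠ 0 → v ≠ 0 → 0 < Hu H (u, v) * u ∧ 0 < Hv H (u, v) * v

/-- Hypothesis (H5): `∇H̃` exists and `∇H̃(w)·w ≥ 4 H̃(w)`. -/
def cond5 (H : ℝ × ℝ → ℝ) : Prop :=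
  Differentiable ℝ (Htil H) ∧ ∀ w : ℝ × ℝ, 4 * Htil H w ≤ fderiv ℝ (Htil H) w w

/-- Hypothesis (H6): `H(w) ≥ μ |w|^σ`. -/
def cond6 (H : ℝ × ℝ → ℝ) (σ μ : ℝ) : Prop := ∀ w : ℝ × ℝ, μ * normR2 w ^ σ ≤ H w

/-- Hypothesis (H7): `γ₀`-exponential critical growth of `H_u` and `H_v`. -/
def cond7 (H : ℝ × ℝ → ℝ) (γ₀ : ℝ) : Prop :=
  (∀ γ > γ₀,
    Tendsto (fun w : ℝ × ℝ => |Hu H w| * Real.exp (-γ * nsq w)) (cobounded (ℝ × ℝ)) (𝓝 0) ∧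
    Tendsto (fun w : ℝ × ℝ => |Hv H w| * Real.exp (-γ * nsq w)) (cobounded (ℝ × ℝ)) (𝓝 0)) ∧
  (∀ γ, 0 < γ → γ < γ₀ →
    Tendsto (fun w : ℝ × ℝ => |Hu H w| * Real.exp (-γ * nsq w)) (cobounded (ℝ × ℝ)) atTop ∧
    Tendsto (fun w : ℝ × ℝ => |Hv H w| * Real.exp (-γ * nsq w)) (cobounded (ℝ × ℝ)) atTop)

/-- The squared norm of the space `E = H¹ × H¹`. -/
def ENormSq (w : (Plane → ℝ) × (Plane → ℝ)) : ℝ := mass w.1 + mass w.2 + gradD2 w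

/-- Continuity of a path `[0,1] → E` with respect to the `E`-norm. -/
def PathCont (h : ℝ → (Plane → ℝ) × (Plane → ℝ)) : Prop :=
  ∀ t ∈ Icc (0 : ℝ) 1, ∀ ε > 0, ∃ δ > 0, ∀ s ∈ Icc (0 : ℝ) 1,
    |s - t| < δ → ENormSq (h s - h t) < ε

/-- Admissible paths in `Γ`: continuous paths in `𝒯_r(a,b)` joining `w₁` to `w₂`. -/
def AdmPath (a b : ℝ) (w₁ w₂ : (Plane → ℝ) × (Plane → ℝ))
    (h : ℝ → (Plane → ℝ) × (Plane → ℝ)) : Prop :=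
  PathCont h ∧ (∀ t ∈ Icc (0 : ℝ) 1, InTr a b (h t)) ∧ h 0 = w₁ ∧ h 1 = w₂

/-- `max_{t ∈ [0,1]} J(h(t))` (as a supremum). -/
def JmaxOn (H : ℝ × ℝ → ℝ) (h : ℝ → (Plane → ℝ) × (Plane → ℝ)) : ℝ :=
  sSup ((fun t => Jfun H (h t)) '' Icc (0 : ℝ) 1)

/-- The set of values `max_{t} J(h(t))` over admissible paths `h ∈ Γ`;
its infimum is the mountain-pass level `m_μ(a,b)`. -/
def MPLevels (H : ℝ × ℝ → ℝ) (a b : ℝ) (w₁ w₂ : (Plane → ℝ) × (Plane → ℝ)) : Set ℝ :=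
  {c | ∃ h, AdmPath a b w₁ w₂ h ∧ c = JmaxOn H h}

/-- The mountain-pass geometry for the endpoints `w₁, w₂`. -/
def MPGeom (H : ℝ × ℝ → ℝ) (a b K : ℝ) (w₁ w₂ : (Plane → ℝ) × (Plane → ℝ)) : Prop :=
  0 < K ∧ InTr a b w₁ ∧ InTr a b w₂ ∧ gradD2 w₁ < K / 2 ∧ 2 * K < gradD2 w₂ ∧
    0 < Jfun H w₁ ∧ Jfun H w₂ < 0

/-- The pairing `∫ (∇u·∇φ + λ u φ - g φ)` appearing in the weak form of the equations. -/
def testPair (u φ : Plane → ℝ) (lam : ℝ) (g : Plane → ℝ) : ℝ :=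
  (∫ x, (inner ℝ (gradient u x) (gradient φ x) : ℝ)) + lam * (∫ x, u x * φ x) - ∫ x, g x * φ x

/-- The squared `H¹`-norm. -/
def H1normSq (φ : Plane → ℝ) : ℝ := mass φ + grad2 φ

/-- A Palais–Smale sequence for `J` at level `c`, with Lagrange multipliers
`λ_{1,n}, λ_{2,n}`:  `J(w_n) → c`, `P(w_n) → 0` and
`-Δu_n + λ_{1,n}u_n - H_u(w_n) → 0`, `-Δv_n + λ_{2,n}v_n - H_v(w_n) → 0` in `(H¹)'`. -/
def IsPSSeq (H : ℝ × ℝ → ℝ) (a b c : ℝ) (W : ℕ → (Plane → ℝ) × (Plane → ℝ))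
    (lam1 lam2 : ℕ → ℝ) : Prop :=
  (∀ n, InTr a b (W n)) ∧
  Tendsto (fun n => Jfun H (W n)) atTop (𝓝 c) ∧
  Tendsto (fun n => Pfun H (W n)) atTop (𝓝 0) ∧
  ∃ eps : ℕ → ℝ, Tendsto eps atTop (𝓝 0) ∧
    ∀ n, ∀ φ : Plane → ℝ, InH1 φ → H1normSq φ ≤ 1 →
      |testPair (W n).1 φ (lam1 n) (fun x => Hu H ((W n).1 x, (W n).2 x))| ≤ eps n ∧
      |testPair (W n).2 φ (lam2 n) (fun x => Hv H ((W n).1 x, (W n).2 x))| ≤ eps n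

/-- Weak convergence in `H¹`: convergence of the `H¹` inner products against
every `H¹` test function. -/
def WeakH1 (u : ℕ → Plane → ℝ) (ul : Plane → ℝ) : Prop :=
  ∀ φ : Plane → ℝ, InH1 φ →
    Tendsto (fun n => (∫ x, u n x * φ x) +
        ∫ x, (inner ℝ (gradient (u n) x) (gradient φ x) : ℝ)) atTop
      (𝓝 ((∫ x, ul x * φ x) + ∫ x, (inner ℝ (gradient ul x) (gradient φ x) : ℝ)))

/-- Convergence in `L¹(ℝ²)`. -/
def TendsL1 (f : ℕ → Plane → ℝ) (g : Plane → ℝ) : Prop :=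
  Tendsto (fun n => ∫ x, |f n x - g x|) atTop (𝓝 0)

/-- `u` is a weak solution of `-Δu + λ u = g` in `ℝ²`. -/
def WeakSolEq (lam : ℝ) (u : Plane → ℝ) (g : Plane → ℝ) : Prop :=
  ∀ φ : Plane → ℝ, InH1 φ →
    (∫ x, (inner ℝ (gradient u x) (gradient φ x) : ℝ)) + lam * (∫ x, u x * φ x)
      = ∫ x, g x * φ x

/-- The values of `J` on the Pohozaev manifold `𝒫(a,b)`;
its infimum is the ground-state level `c(a,b)`. -/
def PoSet (H : ℝ × ℝ → ℝ) (a b : ℝ) : Set ℝ :=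
  {c | ∃ w, InTr a b w ∧ Pfun H w = 0 ∧ c = Jfun H w}


/-! Near the origin the sum `|H_u| + |H_v|` is controlled by (H1), far out by (H7), and on the
compact annulus in between it is bounded; since `|w|^(q-1) (e^{γ|w|²} - 1)` is bounded below by a
positive constant away from the origin, a large `κ` absorbs both the annulus and the far region.
The estimate on `H` then follows from `|H(w)| ≤ (|H_u(w)| + |H_v(w)|)|w|`, a consequence of (H2). -/

lemma nsq_nonneg (w : ℝ × ℝ) : 0 ≤ nsq w := by unfold nsq; positivity

lemma normR2_nonneg (w : ℝ × ℝ) : 0 ≤ normR2 w := Real.sqrt_nonneg _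

lemma sq_normR2 (w : ℝ × ℝ) : normR2 w ^ 2 = nsq w := Real.sq_sqrt (nsq_nonneg w)

lemma abs_fst_le_normR2 (w : ℝ × ℝ) : |w.1| ≤ normR2 w :=
  Real.abs_le_sqrt (by unfold nsq; nlinarith [sq_nonneg w.2])

lemma abs_snd_le_normR2 (w : ℝ × ℝ) : |w.2| ≤ normR2 w :=
  Real.abs_le_sqrt (by unfold nsq; nlinarith [sq_nonneg w.1])

lemma norm_le_normR2 (w : ℝ × ℝ) : ‖w‖ ≤ normR2 w :=
  max_le (abs_fst_le_normR2 w) (abs_snd_le_normR2 w)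

lemma continuous_Hu {H : ℝ × ℝ → ℝ} (h : ContDiff ℝ 1 H) : Continuous (Hu H) :=
  (h.continuous_fderiv one_ne_zero).clm_apply continuous_const

lemma continuous_Hv {H : ℝ × ℝ → ℝ} (h : ContDiff ℝ 1 H) : Continuous (Hv H) :=
  (h.continuous_fderiv one_ne_zero).clm_apply continuous_const

lemma rpow_mul_mul_sq_le_rpow_mul_exp_sub_one {δ r γ p : ℝ} (hδ : 0 ≤ δ) (hδr : δ ≤ r)
    (hγ : 0 ≤ γ) (hp : 0 ≤ p) :
    δ ^ p * (γ * δ ^ 2) ≤ r ^ p * (exp (γ * r ^ 2) - 1) := by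
  have hsq : γ * δ ^ 2 ≤ γ * r ^ 2 := by gcongr
  have hexp : γ * r ^ 2 ≤ exp (γ * r ^ 2) - 1 := by linarith [add_one_le_exp (γ * r ^ 2)]
  exact mul_le_mul (rpow_le_rpow hδ hδr hp) (hsq.trans hexp) (by positivity)
    (rpow_nonneg (hδ.trans hδr) p)

lemma one_sub_exp_neg_mul_exp_le {a x : ℝ} (h : a ≤ x) : (1 - exp (-a)) * exp x ≤ exp x - 1 := by
  have : 1 ≤ exp (-a + x) := one_le_exp (by linarith)
  rw [sub_mul, one_mul, ← exp_add]
  linarith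

lemma one_sub_exp_neg_mul_exp_le_rpow_mul_exp_sub_one {r γ p : ℝ} (hr : 1 ≤ r) (hγ : 0 ≤ γ)
    (hp : 0 ≤ p) : (1 - exp (-γ)) * exp (γ * r ^ 2) ≤ r ^ p * (exp (γ * r ^ 2) - 1) := by
  have hγr : γ ≤ γ * r ^ 2 := le_mul_of_one_le_right hγ (one_le_pow₀ hr)
  calc (1 - exp (-γ)) * exp (γ * r ^ 2) ≤ exp (γ * r ^ 2) - 1 := one_sub_exp_neg_mul_exp_le hγr
    _ = 1 * (exp (γ * r ^ 2) - 1) := (one_mul _).symm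
    _ ≤ r ^ p * (exp (γ * r ^ 2) - 1) := by
      gcongr
      · linarith [one_le_exp (mul_nonneg hγ (sq_nonneg r))]
      · exact one_le_rpow hr hp

theorem exists_le_add_mul_rpow_mul_exp_sub_one {E : Type*} [NormedAddCommGroup E]
    [ProperSpace E] {g ρ : E → ℝ} (hg : Continuous g) (hρ : ∀ w, ‖w‖ ≤ ρ w)
    {ε τ γ p C : ℝ} (hε : 0 ≤ ε) (hγ : 0 < γ) (hp : 0 ≤ p)
    (h_zero : ∀ᶠ w in 𝓝 0, g w ≤ ε * ρ w ^ τ)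
    (h_inf : ∀ᶠ w in cobounded E, g w ≤ C * exp (γ * ρ w ^ 2)) :
    ∃ κ > 0, ∀ w, g w ≤ ε * ρ w ^ τ + κ * ρ w ^ p * (exp (γ * ρ w ^ 2) - 1) := by
  obtain ⟨δ, hδ, h_small⟩ := Metric.eventually_nhds_iff.1 h_zero
  obtain ⟨R, -, h_large⟩ :=
    (Metric.hasBasis_cobounded_compl_closedBall (0 : E)).eventually_iff.1 h_inf
  obtain ⟨M, hM⟩ := (isCompact_closedBall (0 : E) (max R 1)).exists_bound_of_continuousOn
    hg.continuousOn
  set c₁ := δ ^ p * (γ * δ ^ 2)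
  set c₂ := 1 - exp (-γ)
  have hc₁ : 0 < c₁ := by positivity
  have hc₂ : 0 < c₂ := sub_pos.2 (exp_lt_one_iff.2 (neg_lt_zero.2 hγ))
  set κ := max 1 (max (M / c₁) (C / c₂))
  have hκ : 0 < κ := lt_max_of_lt_left one_pos
  refine ⟨κ, hκ, fun w => ?_⟩
  have hρ0 : 0 ≤ ρ w := (norm_nonneg w).trans (hρ w)
  have hexp : 0 ≤ exp (γ * ρ w ^ 2) - 1 := by
    linarith [one_le_exp (mul_nonneg hγ.le (sq_nonneg (ρ w)))]
  have hε_term : 0 ≤ ε * ρ w ^ τ := mul_nonneg hε (rpow_nonneg hρ0 τ)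
  have hκ_term : 0 ≤ κ * ρ w ^ p * (exp (γ * ρ w ^ 2) - 1) := by
    have := rpow_nonneg hρ0 p
    positivity
  rw [mul_assoc κ]
  rcases lt_or_ge ‖w‖ δ with h_near | h_far
  · linarith [h_small (by rwa [dist_zero_right])]
  have hδρ : δ ≤ ρ w := h_far.trans (hρ w)
  rcases le_or_gt ‖w‖ (max R 1) with h_mid | h_out
  · have hgM : g w ≤ M :=
      (le_abs_self _).trans (hM w (by rwa [Metric.mem_closedBall, dist_zero_right]))
    have hMκ : M ≤ κ * c₁ :=
      (div_le_iff₀ hc₁).1 ((le_max_left _ _).trans (le_max_right _ _))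
    have := rpow_mul_mul_sq_le_rpow_mul_exp_sub_one hδ.le hδρ hγ.le hp
    nlinarith
  · have hgC : g w ≤ C * exp (γ * ρ w ^ 2) :=
      h_large (by rw [mem_compl_iff, Metric.mem_closedBall, dist_zero_right, not_le]
                  exact (le_max_left R 1).trans_lt h_out)
    have hCκ : C ≤ κ * c₂ :=
      (div_le_iff₀ hc₂).1 ((le_max_right _ _).trans (le_max_right _ _))
    have := one_sub_exp_neg_mul_exp_le_rpow_mul_exp_sub_one
      ((le_max_right R 1).trans (h_out.le.trans (hρ w))) hγ.le hp
    nlinarith [exp_pos (γ * ρ w ^ 2)]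

lemma cond1.eventually_abs_Hu_add_abs_Hv_le {H : ℝ × ℝ → ℝ} {τ : ℝ} (h1 : cond1 H τ) {ε : ℝ}
    (hε : 0 < ε) : ∀ᶠ w in 𝓝 0, |Hu H w| + |Hv H w| ≤ ε * normR2 w ^ τ := by
  filter_upwards [h1.1.def (half_pos hε), h1.2.def (half_pos hε)] with w hu hv
  rw [Real.norm_eq_abs, Real.norm_eq_abs, abs_of_nonneg (rpow_nonneg (normR2_nonneg w) τ)]
    at hu hv
  linarith

lemma cond7.eventually_abs_Hu_add_abs_Hv_le {H : ℝ × ℝ → ℝ} {γ₀ γ : ℝ} (h7 : cond7 H γ₀)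
    (hγ : γ₀ < γ) : ∀ᶠ w in cobounded (ℝ × ℝ), |Hu H w| + |Hv H w| ≤ 2 * exp (γ * nsq w) := by
  obtain ⟨hu, hv⟩ := h7.1 γ hγ
  filter_upwards [hu.eventually_le_const one_pos, hv.eventually_le_const one_pos] with w hu hv
  have hexp : exp (-γ * nsq w) * exp (γ * nsq w) = 1 := by rw [← exp_add]; simp
  nlinarith [exp_pos (γ * nsq w), abs_nonneg (Hu H w), abs_nonneg (Hv H w)]

lemma cond2.abs_le_mul_normR2 {H : ℝ × ℝ → ℝ} {θ : ℝ} (h2 : cond2 H θ) (hθ : 1 ≤ θ)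
    (hH : ContDiff ℝ 1 H) (w : ℝ × ℝ) : |H w| ≤ (|Hu H w| + |Hv H w|) * normR2 w := by
  have h_ne : ∀ w ≠ (0 : ℝ × ℝ), |H w| ≤ (|Hu H w| + |Hv H w|) * normR2 w := by
    intro w hw
    obtain ⟨hpos, hle⟩ := h2 w hw
    have hH_pos : 0 < H w := pos_of_mul_pos_right hpos (by linarith)
    have hu : Hu H w * w.1 ≤ |Hu H w| * normR2 w := (le_abs_self _).trans <| by
      rw [abs_mul]; exact mul_le_mul_of_nonneg_left (abs_fst_le_normR2 w) (abs_nonneg _)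
    have hv : Hv H w * w.2 ≤ |Hv H w| * normR2 w := (le_abs_self _).trans <| by
      rw [abs_mul]; exact mul_le_mul_of_nonneg_left (abs_snd_le_normR2 w) (abs_nonneg _)
    rw [abs_of_pos hH_pos]
    nlinarith
  have hcont : Continuous fun w => (|Hu H w| + |Hv H w|) * normR2 w :=
    ((continuous_Hu hH).abs.add (continuous_Hv hH).abs).mul
      (continuous_sqrt.comp ((continuous_fst.pow 2).add (continuous_snd.pow 2)))
  exact le_on_closure (s := {0}ᶜ) h_ne hH.continuous.abs.continuousOn hcont.continuousOn
    (by simp only [closure_compl_singleton, mem_univ])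

/-- The growth estimates (2.5) and (2.6) on the nonlinearities. -/
theorem growth_estimates (H : ℝ × ℝ → ℝ) (τ θ γ₀ : ℝ)
    (hτ : 3 < τ) (hθ : 4 < θ) (hγ₀ : 0 < γ₀)
    (h0 : ContDiff ℝ 2 H) (h1 : cond1 H τ) (h2 : cond2 H θ) (h7 : cond7 H γ₀) :
    ∀ q > (2 : ℝ), ∀ ε > (0 : ℝ), ∀ γ > γ₀, ∃ κ > (0 : ℝ), ∀ w : ℝ × ℝ,
      |Hu H w| + |Hv H w| ≤
        ε * normR2 w ^ τ + κ * normR2 w ^ (q - 1) * (Real.exp (γ * nsq w) - 1) ∧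
      |H w| ≤
        ε * normR2 w ^ (τ + 1) + κ * normR2 w ^ q * (Real.exp (γ * nsq w) - 1) := by
  intro q hq ε hε γ hγ
  have hC1 : ContDiff ℝ 1 H := h0.of_le (by norm_num)
  obtain ⟨κ, hκ, hgrad⟩ := exists_le_add_mul_rpow_mul_exp_sub_one (g := fun w => |Hu H w| + |Hv H w|)
    ((continuous_Hu hC1).abs.add (continuous_Hv hC1).abs) norm_le_normR2 hε.le
    (hγ₀.trans hγ) (by linarith : 0 ≤ q - 1) (h1.eventually_abs_Hu_add_abs_Hv_le hε)
    (by simpa only [sq_normR2] using h7.eventually_abs_Hu_add_abs_Hv_le hγ)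
  simp only [sq_normR2] at hgrad
  refine ⟨κ, hκ, fun w => ⟨hgrad w, ?_⟩⟩
  have hρ := normR2_nonneg w
  calc |H w| ≤ (|Hu H w| + |Hv H w|) * normR2 w := h2.abs_le_mul_normR2 (by linarith) hC1 w
    _ ≤ (ε * normR2 w ^ τ + κ * normR2 w ^ (q - 1) * (exp (γ * nsq w) - 1)) * normR2 w :=
      mul_le_mul_of_nonneg_right (hgrad w) hρ
    _ = ε * normR2 w ^ (τ + 1) + κ * normR2 w ^ q * (exp (γ * nsq w) - 1) := by
      have hρq : normR2 w ^ q = normR2 w ^ (q - 1) * normR2 w := by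
        rw [← rpow_add_one' hρ (by linarith), sub_add_cancel]
      rw [rpow_add_one' hρ (by linarith), hρq]
      ring

end
end

section
/- Assume H satisfies (H0)–(H2), (H6) and (H7), and let a,b>0 with a²+b²<2π/γ₀. Then for every w∈𝒯_r(a,b): ‖∇F(w,s)‖_{L²}→0 and J(F(w,s))→0 as s→−∞. -/
/-!
The scaling `F(w,s)` multiplies the Dirichlet energy by exactly `e^{2s}` and turns the potential
term into `e^{-2s} ∫ H(e^s w)`. The Ambrosetti–Rabinowitz condition (H2) with `θ ≥ 3` makes
`r ↦ H(r z) / r³` nondecreasing on `r > 0`, so `∫ H(e^s w) = O(e^{3s})` as `s → -∞` once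
`H(e^{s₀} w)` is integrable for a single `s₀`; the potential term is then `O(e^s)`.
-/

open MeasureTheory Filter Topology Asymptotics Real Set Bornology

noncomputable section

lemma fderiv_const_mul_comp_smul {E : Type*} [NormedAddCommGroup E] [NormedSpace ℝ E]
    (u : E → ℝ) (c : ℝ) (x : E) :
    fderiv ℝ (fun y => c * u (c • y)) x = (c * c) • fderiv ℝ u (c • x) := by
  have : (fun y => c * u (c • y)) = c • fun y => u (c • y) := rfl
  rw [this, fderiv_const_smul_field, Pi.smul_apply, fderiv_comp_smul, smul_smul]

lemma gradient_const_mul_comp_smul {E : Type*} [NormedAddCommGroup E] [InnerProductSpace ℝ E]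
    [CompleteSpace E] (u : E → ℝ) (c : ℝ) (x : E) :
    gradient (fun y => c * u (c • y)) x = (c * c) • gradient u (c • x) := by
  simp only [gradient, fderiv_const_mul_comp_smul, map_smul]

lemma integral_comp_smul_plane (f : Plane → ℝ) (c : ℝ) :
    ∫ x, f (c • x) = (c ^ 2)⁻¹ * ∫ x, f x := by
  rw [Measure.integral_comp_smul, finrank_euclideanSpace_fin, abs_inv, abs_pow, sq_abs,
    smul_eq_mul]

lemma grad2_const_mul_comp_smul (u : Plane → ℝ) (c : ℝ) :
    grad2 (fun y => c * u (c • y)) = c ^ 2 * grad2 u := by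
  simp only [grad2, gradient_const_mul_comp_smul, norm_smul, mul_pow, integral_const_mul,
    integral_comp_smul_plane (fun y => ‖gradient u y‖ ^ 2)]
  rw [Real.norm_eq_abs, abs_mul_self, ← sq, sq (c ^ 2), ← mul_assoc, mul_self_mul_inv]

lemma gradD2_scaleF (w : (Plane → ℝ) × (Plane → ℝ)) (s : ℝ) :
    gradD2 (scaleF w s) = Real.exp s ^ 2 * gradD2 w := by
  simp only [gradD2, scaleF, grad2_const_mul_comp_smul, mul_add]

lemma integral_scaleF (H : ℝ × ℝ → ℝ) (w : (Plane → ℝ) × (Plane → ℝ)) (s : ℝ) :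
    ∫ x, H ((scaleF w s).1 x, (scaleF w s).2 x)
      = (Real.exp s ^ 2)⁻¹ * ∫ y, H (Real.exp s • (w.1 y, w.2 y)) :=
  integral_comp_smul_plane (fun y => H (Real.exp s • (w.1 y, w.2 y))) _

lemma Jfun_scaleF (H : ℝ × ℝ → ℝ) (w : (Plane → ℝ) × (Plane → ℝ)) (s : ℝ) :
    Jfun H (scaleF w s) = 1 / 2 * (Real.exp s ^ 2 * gradD2 w)
      - (Real.exp s ^ 2)⁻¹ * ∫ y, H (Real.exp s • (w.1 y, w.2 y)) := by
  rw [Jfun, gradD2_scaleF, integral_scaleF]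

lemma fderiv_apply_eq_Hu_mul_add_Hv_mul (H : ℝ × ℝ → ℝ) (w z : ℝ × ℝ) :
    fderiv ℝ H w z = Hu H w * z.1 + Hv H w * z.2 := by
  conv_lhs => rw [show z = z.1 • ((1 : ℝ), (0 : ℝ)) + z.2 • ((0 : ℝ), (1 : ℝ)) by simp]
  rw [map_add, map_smul, map_smul, smul_eq_mul, smul_eq_mul, Hu, Hv]
  ring

lemma hasDerivAt_apply_smul {H : ℝ × ℝ → ℝ} (hH : Differentiable ℝ H) (z : ℝ × ℝ) (r : ℝ) :
    HasDerivAt (fun t : ℝ => H (t • z)) (Hu H (r • z) * z.1 + Hv H (r • z) * z.2) r := by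
  rw [← fderiv_apply_eq_Hu_mul_add_Hv_mul]
  exact (hH _).hasFDerivAt.comp_hasDerivAt r (by simpa using (hasDerivAt_id r).smul_const z)

namespace cond2

variable {H : ℝ × ℝ → ℝ} {θ : ℝ}

lemma pos (h2 : cond2 H θ) (hθ : 0 ≤ θ) {w : ℝ × ℝ} (hw : w ≠ 0) : 0 < H w :=
  pos_of_mul_pos_right (h2 w hw).1 hθ

lemma monotoneOn_div_pow (h2 : cond2 H θ) (hH : Differentiable ℝ H) {n : ℕ}
    (hn : (n : ℝ) ≤ θ) {z : ℝ × ℝ} (hz : z ≠ 0) :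
    MonotoneOn (fun r => H (r • z) / r ^ n) (Ioi 0) := by
  have hderiv : ∀ r ∈ Ioi (0 : ℝ), HasDerivAt (fun r => H (r • z) / r ^ n)
      (((Hu H (r • z) * z.1 + Hv H (r • z) * z.2) * r ^ n - H (r • z) * (n * r ^ (n - 1)))
        / (r ^ n) ^ 2) r :=
    fun r hr => (hasDerivAt_apply_smul hH z r).div (hasDerivAt_pow n r) (pow_ne_zero _ hr.ne')
  refine monotoneOn_of_deriv_nonneg (convex_Ioi 0)
    (fun r hr => (hderiv r hr).continuousAt.continuousWithinAt) ?_ ?_ <;> rw [interior_Ioi]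
  · exact fun r hr => (hderiv r hr).differentiableAt.differentiableWithinAt
  · intro r hr
    rw [(hderiv r hr).deriv]
    refine div_nonneg ?_ (sq_nonneg _)
    have hrz : r • z ≠ 0 := smul_ne_zero hr.ne' hz
    have hH_pos := h2.pos ((Nat.cast_nonneg n).trans hn) hrz
    have hAR : n * H (r • z) ≤ r * (Hu H (r • z) * z.1 + Hv H (r • z) * z.2) := by
      have := (h2 _ hrz).2
      simp only [Prod.smul_fst, Prod.smul_snd, smul_eq_mul] at this
      nlinarith
    obtain _ | m := n
    · simp only [Nat.cast_zero, zero_mul, pow_zero, mul_one, mul_zero, sub_zero] at hAR ⊢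
      exact nonneg_of_mul_nonneg_right hAR hr
    · have := mul_nonneg (pow_nonneg hr.le m) (sub_nonneg.2 hAR)
      simp only [Nat.add_sub_cancel, pow_succ] at this ⊢
      linarith

lemma apply_smul_le_of_ne_zero (h2 : cond2 H θ) (hH : Differentiable ℝ H) {n : ℕ}
    (hn : (n : ℝ) ≤ θ) {z : ℝ × ℝ} (hz : z ≠ 0) {t : ℝ} (ht0 : 0 < t) (ht1 : t ≤ 1) :
    H (t • z) ≤ t ^ n * H z := by
  have := h2.monotoneOn_div_pow hH hn hz ht0 (mem_Ioi.2 one_pos) ht1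
  dsimp only at this
  rwa [one_smul, one_pow, div_one, div_le_iff₀ (pow_pos ht0 n), mul_comm] at this

lemma apply_zero (h2 : cond2 H θ) (hH : Differentiable ℝ H) (hθ : 1 ≤ θ) : H 0 = 0 := by
  set z : ℝ × ℝ := (1, 0)
  have hz : z ≠ 0 := by simp [z]
  have hcont : Tendsto (fun t : ℝ => H (t • z)) (𝓝[>] 0) (𝓝 (H 0)) := by
    have : Continuous fun t : ℝ => H (t • z) := hH.continuous.comp (by fun_prop)
    simpa using (this.tendsto 0).mono_left nhdsWithin_le_nhds
  have hup : Tendsto (fun t : ℝ => t ^ 1 * H z) (𝓝[>] 0) (𝓝 0) := by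
    simpa using ((continuous_mul_const (H z)).tendsto 0).mono_left nhdsWithin_le_nhds
  refine tendsto_nhds_unique hcont
    (tendsto_of_tendsto_of_tendsto_of_le_of_le' tendsto_const_nhds hup ?_ ?_)
  · filter_upwards [self_mem_nhdsWithin] with t ht
    exact (h2.pos (by linarith) (smul_ne_zero (ne_of_gt ht) hz)).le
  · filter_upwards [Ioc_mem_nhdsGT one_pos] with t ht
    exact h2.apply_smul_le_of_ne_zero hH (by simpa using hθ) hz ht.1 ht.2

lemma nonneg (h2 : cond2 H θ) (hH : Differentiable ℝ H) (hθ : 1 ≤ θ) (w : ℝ × ℝ) :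
    0 ≤ H w := by
  rcases eq_or_ne w 0 with rfl | hw
  · exact (h2.apply_zero hH hθ).ge
  · exact (h2.pos (by linarith) hw).le

lemma apply_smul_le (h2 : cond2 H θ) (hH : Differentiable ℝ H) {n : ℕ} (hn : 1 ≤ n)
    (hnθ : (n : ℝ) ≤ θ) (z : ℝ × ℝ) {t : ℝ} (ht0 : 0 < t) (ht1 : t ≤ 1) :
    H (t • z) ≤ t ^ n * H z := by
  rcases eq_or_ne z 0 with rfl | hz
  · rw [smul_zero, h2.apply_zero hH ((Nat.one_le_cast.2 hn).trans hnθ), mul_zero]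
  · exact h2.apply_smul_le_of_ne_zero hH hnθ hz ht0 ht1

variable {α : Type*} [MeasurableSpace α] {μ : Measure α}

lemma integral_apply_smul_le (h2 : cond2 H θ) (hH : Differentiable ℝ H) {n : ℕ} (hn : 1 ≤ n)
    (hnθ : (n : ℝ) ≤ θ) {W : α → ℝ × ℝ} {c c₀ : ℝ}
    (hint : Integrable (fun y => H (c₀ • W y)) μ) (hc : 0 < c) (hcc₀ : c ≤ c₀) :
    ∫ y, H (c • W y) ∂μ ≤ (c / c₀) ^ n * ∫ y, H (c₀ • W y) ∂μ := by
  have hc₀ : 0 < c₀ := hc.trans_le hcc₀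
  rw [← integral_const_mul]
  refine integral_mono_of_nonneg
    (Eventually.of_forall fun y => h2.nonneg hH ((Nat.one_le_cast.2 hn).trans hnθ) _)
    (hint.const_mul _) (Eventually.of_forall fun y => ?_)
  calc H (c • W y) = H ((c / c₀) • c₀ • W y) := by rw [smul_smul, div_mul_cancel₀ _ hc₀.ne']
    _ ≤ _ := h2.apply_smul_le hH hn hnθ _ (div_pos hc hc₀) ((div_le_one hc₀).2 hcc₀)

lemma tendsto_inv_sq_mul_integral_apply_smul (h2 : cond2 H θ) (hH : Differentiable ℝ H)
    (hθ : 3 ≤ θ) (W : α → ℝ × ℝ) :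
    Tendsto (fun c => (c ^ 2)⁻¹ * ∫ y, H (c • W y) ∂μ) (𝓝[>] 0) (𝓝 0) := by
  by_cases hI : ∃ c₀ : ℝ, 0 < c₀ ∧ Integrable (fun y => H (c₀ • W y)) μ
  · obtain ⟨c₀, hc₀, hint⟩ := hI
    set A := ∫ y, H (c₀ • W y) ∂μ
    have hup : Tendsto (fun c : ℝ => c * (A / c₀ ^ 3)) (𝓝[>] 0) (𝓝 0) := by
      simpa using ((continuous_mul_const (A / c₀ ^ 3)).tendsto 0).mono_left nhdsWithin_le_nhds
    refine tendsto_of_tendsto_of_tendsto_of_le_of_le' tendsto_const_nhds hup ?_ ?_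
    · filter_upwards with c
      exact mul_nonneg (by positivity) (integral_nonneg fun y => h2.nonneg hH (by linarith) _)
    · filter_upwards [Ioc_mem_nhdsGT hc₀] with c ⟨hc, hcc₀⟩
      calc (c ^ 2)⁻¹ * ∫ y, H (c • W y) ∂μ ≤ (c ^ 2)⁻¹ * ((c / c₀) ^ 3 * A) := by
            gcongr
            exact h2.integral_apply_smul_le hH (by norm_num) (by exact_mod_cast hθ) hint hc hcc₀
        _ = c * (A / c₀ ^ 3) := by field_simp
  · -- no scale is integrable, so all these integrals take Bochner's junk value `0`
    simp only [not_exists, not_and] at hI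
    refine tendsto_const_nhds.congr' ?_
    filter_upwards [self_mem_nhdsWithin] with c hc
    rw [integral_undef (hI c hc), mul_zero]

end cond2

theorem geometry_at_minus_infty_general (H : ℝ × ℝ → ℝ) (θ : ℝ) (hθ : 4 < θ)
    (h0 : ContDiff ℝ 2 H) (h2 : cond2 H θ)
    (w : (Plane → ℝ) × (Plane → ℝ)) :
    Tendsto (fun s => Real.sqrt (gradD2 (scaleF w s))) atBot (𝓝 0) ∧
    Tendsto (fun s => Jfun H (scaleF w s)) atBot (𝓝 0) := by
  have hH : Differentiable ℝ H := h0.differentiable (by norm_num)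
  have hsq : Tendsto (fun c : ℝ => c ^ 2) (𝓝[>] 0) (𝓝 0) := by
    simpa using ((continuous_pow 2).tendsto (0 : ℝ)).mono_left nhdsWithin_le_nhds
  constructor
  · have hsqrt : ∀ s, Real.sqrt (gradD2 (scaleF w s)) = Real.exp s * Real.sqrt (gradD2 w) := by
      intro s
      rw [gradD2_scaleF, Real.sqrt_mul (sq_nonneg _), Real.sqrt_sq (Real.exp_pos s).le]
    simpa [hsqrt] using Real.tendsto_exp_atBot.mul_const (Real.sqrt (gradD2 w))
  · have hJ := ((hsq.mul_const (gradD2 w)).const_mul (1 / 2)).sub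
      (h2.tendsto_inv_sq_mul_integral_apply_smul hH (by linarith) (fun y => (w.1 y, w.2 y))
        (μ := volume))
    rw [zero_mul, mul_zero, sub_zero] at hJ
    exact (hJ.comp Real.tendsto_exp_atBot_nhdsGT).congr fun s => (Jfun_scaleF H w s).symm

/-- Lemma 3.1 (i): `‖∇F(w,s)‖_{L²} → 0` and `J(F(w,s)) → 0` as `s → -∞`. -/
theorem geometry_at_minus_infty (H : ℝ × ℝ → ℝ) (τ θ σ μ γ₀ a b : ℝ)
    (hτ : 3 < τ) (hθ : 4 < θ) (hσ : 4 < σ) (hμ : 0 < μ) (hγ₀ : 0 < γ₀)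
    (h0 : ContDiff ℝ 2 H) (h1 : cond1 H τ) (h2 : cond2 H θ)
    (h6 : cond6 H σ μ) (h7 : cond7 H γ₀)
    (ha : 0 < a) (hb : 0 < b) (hab : a ^ 2 + b ^ 2 < 2 * π / γ₀)
    (w : (Plane → ℝ) × (Plane → ℝ)) (hw : InTr a b w) :
    Tendsto (fun s => Real.sqrt (gradD2 (scaleF w s))) atBot (𝓝 0) ∧
    Tendsto (fun s => Jfun H (scaleF w s)) atBot (𝓝 0) :=
  geometry_at_minus_infty_general H θ hθ h0 h2 w

end
end
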